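/- Let k be a field, let S be an integral domain that is a k-algebra, let Q be an ideal of S, and set R = k + Q. If R ≠ S, then the conductor of the extension R ⊆ S equals Q; that is, {a ∈ S : a·S ⊆ R} = Q. -/

import Mathlib

/-! If `a` lies in the conductor, write `a = c + q` with `c ∈ k`, `q ∈ Q`. Since `Q` is an ideal
of `S` inside `R = k + Q`, it lies in the conductor, hence so does `c`. A nonzero `c` is a unit
of `R`, and `c • S ⊆ R` would then force `R = S`. -/

/-- For an ideal `Q` of a commutative `k`-algebra `S`, the subalgebra `k + Q` of `S`,
consisting of all elements of the form `c • 1 + q` with `c ∈ k`, `q ∈ Q`. -/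
def kPlus (k : Type*) {S : Type*} [CommRing k] [CommRing S] [Algebra k S]
    (Q : Ideal S) : Subalgebra k S where
  carrier := {s : S | ∃ c : k, s - algebraMap k S c ∈ Q}
  add_mem' := by
    rintro a b ⟨c, hc⟩ ⟨d, hd⟩
    exact ⟨c + d, by rw [map_add]; convert Q.add_mem hc hd using 1; ring⟩
  mul_mem' := by
    rintro a b ⟨c, hc⟩ ⟨d, hd⟩
    refine ⟨c * d, ?_⟩
    have : a * b - algebraMap k S (c * d)
        = a * (b - algebraMap k S d) + algebraMap k S d * (a - algebraMap k S c) := by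
      rw [map_mul]; ring
    rw [this]
    exact Q.add_mem (Q.mul_mem_left _ hd) (Q.mul_mem_left _ hc)
  algebraMap_mem' := fun c => ⟨c, by simp⟩

theorem mem_kPlus_of_mem {k S : Type*} [CommRing k] [CommRing S] [Algebra k S] {Q : Ideal S}
    {q : S} (hq : q ∈ Q) : q ∈ kPlus k Q :=
  ⟨0, by simpa using hq⟩

theorem Subalgebra.eq_top_of_forall_smul_mem {k S : Type*} [Field k] [CommRing S] [Algebra k S]
    (A : Subalgebra k S) {c : k} (hc : c ≠ 0) (h : ∀ s : S, c • s ∈ A) : A = ⊤ :=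
  eq_top_iff.2 fun s _ => by simpa [smul_smul, hc] using A.smul_mem (h s) c⁻¹

theorem kPlus_conductor_eq_general (k : Type*) [Field k]
    (S : Type*) [CommRing S] [Algebra k S]
    (Q : Ideal S) (hRS : kPlus k Q ≠ ⊤) :
    {a : S | ∀ s : S, a * s ∈ kPlus k Q} = (Q : Set S) := by
  ext a
  refine ⟨fun ha => ?_, fun hq s => mem_kPlus_of_mem (Q.mul_mem_right s hq)⟩
  obtain ⟨c, hc⟩ := mul_one a ▸ ha 1
  have hc_cond : ∀ s : S, c • s ∈ kPlus k Q := fun s => by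
    have := sub_mem (ha s) (mem_kPlus_of_mem (Q.mul_mem_right s hc))
    rwa [← sub_mul, sub_sub_cancel, ← Algebra.smul_def] at this
  have hc0 : c = 0 := by
    by_contra hc0
    exact hRS ((kPlus k Q).eq_top_of_forall_smul_mem hc0 hc_cond)
  simpa [hc0] using hc

set_option synthInstance.maxHeartbeats 1000000 in
/-- Let `k` be a field, `S` a domain which is a `k`-algebra, `Q` an ideal
of `S`, and `R = k + Q`.  If `R ≠ S`, then the conductor of the extension `R ⊆ S` equals
`Q`; that is, `{a ∈ S : a·S ⊆ R} = Q`. -/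
theorem kPlus_conductor_eq (k : Type*) [Field k]
    (S : Type*) [CommRing S] [IsDomain S] [Algebra k S]
    (Q : Ideal S) (hRS : kPlus k Q ≠ ⊤) :
    {a : S | ∀ s : S, a * s ∈ kPlus k Q} = (Q : Set S) :=
  kPlus_conductor_eq_general k S Q hRS
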